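/- Suppose ∑_{n=0}^{∞} c_n = ∞ and the series ∑_{n=1}^{∞} a_n converges, where a_n = ∏_{i=1}^{n} (p_{i−1}/q_i). Then absorption is ergodic: for every integer i ≥ 0, the absorption time T(ω) = inf{n ∈ ℕ : ω_n = −1} (an ℕ∪{∞}-valued function on ℤ^ℕ) has finite expectation under μ_i, i.e. ∫ T dμ_i < ∞ (in particular T is μ_i-almost surely finite). -/

import Mathlib

open MeasureTheory
open scoped ENNReal

/-- Transition probabilities of the absorbing birth-death chain on `ℤ`:
for `i ≥ 0`, move to `i+1` with probability `p i` and to `i-1` with probability `q i`;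
every `i < 0` is absorbing. -/
noncomputable def bdKernel (p q : ℕ → ℝ) : ℤ → ℤ → ℝ := fun i j =>
  if 0 ≤ i then
    (if j = i + 1 then p i.toNat else if j = i - 1 then q i.toNat else 0)
  else
    (if j = i then 1 else 0)

/-- `μ i` is the law (on path space, obtained via Ionescu–Tulcea) of the absorbing
birth-death chain started at `i`, characterised by its finite-dimensional (cylinder)
distributions. -/
def IsBDLaw (p q : ℕ → ℝ) (μ : ℤ → Measure (ℕ → ℤ)) : Prop :=
  ∀ (i : ℤ) (n : ℕ) (f : ℕ → ℤ),
    μ i {ω : ℕ → ℤ | ∀ m ≤ n, ω m = f m} =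
      ENNReal.ofReal ((if f 0 = i then (1 : ℝ) else 0) *
        ∏ m ∈ Finset.range n, bdKernel p q (f m) (f (m + 1)))

/-- `cseq p q n = ∏_{j=0}^{n} q_j / p_j`. -/
noncomputable def cseq (p q : ℕ → ℝ) (n : ℕ) : ℝ :=
  ∏ j ∈ Finset.range (n + 1), q j / p j


/-- `aseq p q n = ∏_{i=1}^{n} p_{i-1} / q_i`. -/
noncomputable def aseq (p q : ℕ → ℝ) (n : ℕ) : ℝ :=
  ∏ i ∈ Finset.Icc 1 n, p (i - 1) / q i

/-!
Write `T` for the absorption time. Then `∫ T dμ_i ≤ ∑ₙ μ_i(T > n)`, and `μ_i(T > n)` is at most the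
total weight of the `n`-step paths from `i` of the chain killed at `-1`. Summing the first-step
recursion of these weights shows that every `g ≥ 0` with `1 + p_i g(i+1) + q_i g(i-1) ≤ g(i)` for
`i ≥ 0` bounds `∑ₙ μ_i(T > n)` by `g(i)` (Foster–Lyapunov). Such a `g` is `g(i) = ∑_{k ≤ i} h_k`
with `h_k = (∑_{j ≥ k} a_j) / (a_k q_k)`: since `a_{k+1} q_{k+1} = a_k p_k`, the first-step equation
`q_k h_k = 1 + p_k h_{k+1}` is just `∑_{j ≥ k} a_j = a_k + ∑_{j > k} a_j`, and `h_k < ∞` because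
`∑ a_n < ∞`.
-/

section PathMass

variable {α : Type*} (K : α → α → ℝ≥0∞)

noncomputable def pathMass (n : ℕ) (i : α) : ℝ≥0∞ :=
  ∑' v : Fin n → α, ∏ m : Fin n, K ((Fin.cons i v : Fin (n + 1) → α) m.castSucc) (v m)

variable {K}

@[simp]
lemma pathMass_zero (i : α) : pathMass K 0 i = 1 := by
  simp [pathMass]

lemma pathMass_succ (n : ℕ) (i : α) :
    pathMass K (n + 1) i = ∑' z, K i z * pathMass K n z := by
  rw [pathMass, ← (Fin.consEquiv fun _ => α).tsum_eq, ENNReal.tsum_prod']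
  refine tsum_congr fun z => ?_
  rw [pathMass, ← ENNReal.tsum_mul_left]
  refine tsum_congr fun w => ?_
  simp [Fin.consEquiv, Fin.prod_univ_succ]

lemma pathMass_eq_tsum_ite [DecidableEq α] (n : ℕ) (i : α) :
    pathMass K n i = ∑' v : Fin (n + 1) → α,
      (if v 0 = i then 1 else 0) * ∏ m : Fin n, K (v m.castSucc) (v m.succ) := by
  rw [← (Fin.consEquiv fun _ => α).tsum_eq, ENNReal.tsum_prod',
    tsum_eq_single i fun z hz => by simp [hz]]
  simp [Fin.consEquiv, pathMass]

theorem tsum_pathMass_le {S : Set α} {G : α → ℝ≥0∞}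
    (hK : ∀ i ∈ S, ∀ z ∉ S, K i z = 0) (hG : ∀ i ∈ S, 1 + ∑' z, K i z * G z ≤ G i)
    {i : α} (hi : i ∈ S) : ∑' n, pathMass K n i ≤ G i := by
  suffices h : ∀ N, ∀ i ∈ S, ∑ n ∈ Finset.range N, pathMass K n i ≤ G i from
    ENNReal.tsum_le_of_sum_range_le fun N => h N i hi
  intro N
  induction N with
  | zero => simp
  | succ N ih =>
    intro i hi
    have hstep : ∑' z, K i z * ∑ n ∈ Finset.range N, pathMass K n z ≤ ∑' z, K i z * G z :=
      ENNReal.tsum_le_tsum fun z => by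
        by_cases hz : z ∈ S
        · exact mul_le_mul_right (ih z hz) _
        · simp [hK i hi z hz]
    calc ∑ n ∈ Finset.range (N + 1), pathMass K n i
        = 1 + ∑' z, K i z * ∑ n ∈ Finset.range N, pathMass K n z := by
          simp only [Finset.sum_range_succ', pathMass_zero, pathMass_succ, Finset.mul_sum]
          rw [Summable.tsum_finsetSum fun _ _ => ENNReal.summable, add_comm]
      _ ≤ 1 + ∑' z, K i z * G z := add_le_add_right hstep 1
      _ ≤ G i := hG i hi

end PathMass

section HittingTime

variable {β : Type*}

def survivalSet (b : β) (n : ℕ) : Set (ℕ → β) := {ω | ∀ m ≤ n, ω m ≠ b}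

lemma mem_survivalSet {b : β} {n : ℕ} {ω : ℕ → β} : ω ∈ survivalSet b n ↔ ∀ m ≤ n, ω m ≠ b :=
  Iff.rfl

lemma hitTime_le_tsum_indicator_survivalSet (ω : ℕ → β) (b : β) :
    ⨅ n ∈ {m : ℕ | ω m = b}, (n : ℝ≥0∞) ≤ ∑' n, (survivalSet b n).indicator 1 ω := by
  classical
  by_cases hhit : ∃ t, ω t = b
  · have hbefore : ∀ n < Nat.find hhit, (survivalSet b n).indicator 1 ω = (1 : ℝ≥0∞) :=
      fun n hn => Set.indicator_of_mem
        (mem_survivalSet.2 fun m hm => Nat.find_min hhit (hm.trans_lt hn)) _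
    calc ⨅ n ∈ {m : ℕ | ω m = b}, (n : ℝ≥0∞)
        ≤ Nat.find hhit := biInf_le _ (Nat.find_spec hhit)
      _ = ∑ n ∈ Finset.range (Nat.find hhit), (survivalSet b n).indicator 1 ω := by
        rw [Finset.sum_congr rfl fun n hn => hbefore n (Finset.mem_range.mp hn)]
        simp
      _ ≤ _ := ENNReal.sum_le_tsum _
  · push Not at hhit
    have hnever : ∀ n, (survivalSet b n).indicator 1 ω = (1 : ℝ≥0∞) :=
      fun n => Set.indicator_of_mem (mem_survivalSet.2 fun m _ => hhit m) _
    simp [hnever]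

lemma measurableSet_survivalSet [MeasurableSpace β] [MeasurableSingletonClass β] (b : β)
    (n : ℕ) : MeasurableSet (survivalSet b n) := by
  simp only [survivalSet, Set.ofPred_forall]
  exact .iInter fun m => .iInter fun _ =>
    (measurableSet_singleton b).compl.preimage (measurable_pi_apply m)

lemma lintegral_hitTime_le_tsum_survivalSet [MeasurableSpace β] [MeasurableSingletonClass β]
    (ν : Measure (ℕ → β)) (b : β) :
    ∫⁻ ω, ⨅ n ∈ {m : ℕ | ω m = b}, (n : ℝ≥0∞) ∂ν ≤ ∑' n, ν (survivalSet b n) := by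
  calc ∫⁻ ω, ⨅ n ∈ {m : ℕ | ω m = b}, (n : ℝ≥0∞) ∂ν
      ≤ ∫⁻ ω, ∑' n, (survivalSet b n).indicator 1 ω ∂ν :=
        lintegral_mono fun ω => hitTime_le_tsum_indicator_survivalSet ω b
    _ = ∑' n, ν (survivalSet b n) := by
        rw [lintegral_tsum fun n =>
          (measurable_one.indicator (measurableSet_survivalSet b n)).aemeasurable]
        exact tsum_congr fun n => lintegral_indicator_one (measurableSet_survivalSet b n)

end HittingTime

section BirthDeath

variable {p q : ℕ → ℝ}

lemma bdKernel_nonneg (hp : ∀ i, 0 ≤ p i) (hq : ∀ i, 0 ≤ q i) (i j : ℤ) :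
    0 ≤ bdKernel p q i j := by
  unfold bdKernel
  split_ifs <;> first | exact hp _ | exact hq _ | norm_num

lemma tsum_ofReal_bdKernel_mul {i : ℤ} (hi : 0 ≤ i) (F : ℤ → ℝ≥0∞) :
    ∑' z, ENNReal.ofReal (bdKernel p q i z) * F z =
      ENNReal.ofReal (p i.toNat) * F (i + 1) + ENNReal.ofReal (q i.toNat) * F (i - 1) := by
  classical
  rw [tsum_eq_sum (s := {i + 1, i - 1}) fun z hz => ?_, Finset.sum_pair (by omega)]
  · simp [bdKernel, hi, show i - 1 ≠ i + 1 by omega]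
  · simp only [Finset.mem_insert, Finset.mem_singleton, not_or] at hz
    simp [bdKernel, hi, hz.1, hz.2]

lemma IsBDLaw.measure_cylinder {μ : ℤ → Measure (ℕ → ℤ)} (hlaw : IsBDLaw p q μ)
    (hp : ∀ i, 0 ≤ p i) (hq : ∀ i, 0 ≤ q i) (i : ℤ) {n : ℕ} (v : Fin (n + 1) → ℤ) :
    μ i {ω | ∀ m : Fin (n + 1), ω m = v m} =
      (if v 0 = i then 1 else 0) *
        ∏ m : Fin n, ENNReal.ofReal (bdKernel p q (v m.castSucc) (v m.succ)) := by
  have hcyl : {ω : ℕ → ℤ | ∀ m : Fin (n + 1), ω m = v m} =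
      {ω | ∀ m ≤ n, ω m = v (Fin.ofNat (n + 1) m)} := by
    ext ω
    refine ⟨fun h m hm => ?_, fun h m => ?_⟩
    · simpa [Nat.mod_eq_of_lt (Nat.lt_succ_of_le hm)] using h (Fin.ofNat (n + 1) m)
    · simpa using h m (Nat.lt_succ_iff.mp m.isLt)
  rw [hcyl, hlaw, ENNReal.ofReal_mul (by positivity),
    ENNReal.ofReal_prod_of_nonneg fun _ _ => bdKernel_nonneg hp hq _ _,
    ← Fin.prod_univ_eq_prod_range]
  congr 1
  · simp [apply_ite ENNReal.ofReal]
  · refine Finset.prod_congr rfl fun m _ => ?_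
    simp [← Fin.val_succ]

/-- The chain killed on reaching `-1`: its `n`-step path mass from `i` is the probability of not
being absorbed by time `n`. -/
noncomputable def killedKernel (p q : ℕ → ℝ) (i z : ℤ) : ℝ≥0∞ :=
  if z = -1 then 0 else ENNReal.ofReal (bdKernel p q i z)

lemma killedKernel_le (i z : ℤ) : killedKernel p q i z ≤ ENNReal.ofReal (bdKernel p q i z) := by
  unfold killedKernel
  split_ifs <;> simp

lemma killedKernel_eq_zero {i z : ℤ} (hi : 0 ≤ i) (hz : z < 0) : killedKernel p q i z = 0 := by
  by_cases hz' : z = -1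
  · simp [killedKernel, hz']
  · simp [killedKernel, bdKernel, hi, hz', show z ≠ i + 1 by omega, show z ≠ i - 1 by omega]

lemma IsBDLaw.measure_survivalSet_le_pathMass {μ : ℤ → Measure (ℕ → ℤ)} (hlaw : IsBDLaw p q μ)
    (hp : ∀ i, 0 ≤ p i) (hq : ∀ i, 0 ≤ q i) (i : ℤ) (n : ℕ) :
    μ i (survivalSet (-1) n) ≤ pathMass (killedKernel p q) n i := by
  classical
  set A := survivalSet (-1 : ℤ) n
  have hcover : A ⊆ ⋃ v : Fin (n + 1) → ℤ, A ∩ {ω | ∀ m : Fin (n + 1), ω m = v m} :=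
    fun ω hω => Set.mem_iUnion.2 ⟨fun m => ω m, hω, fun _ => rfl⟩
  refine (measure_mono hcover).trans <| (measure_iUnion_le _).trans ?_
  rw [pathMass_eq_tsum_ite]
  refine ENNReal.tsum_le_tsum fun v => ?_
  by_cases hv : ∀ m, v m ≠ -1
  · refine (measure_mono Set.inter_subset_right).trans_eq ?_
    rw [hlaw.measure_cylinder hp hq]
    congr 2 with m
    simp [killedKernel, hv]
  · obtain ⟨m, hm⟩ := not_forall_not.mp hv
    have hempty : A ∩ {ω | ∀ m : Fin (n + 1), ω m = v m} = ∅ :=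
      Set.eq_empty_of_forall_notMem fun ω ⟨hωA, hωv⟩ =>
        hωA m (Nat.lt_succ_iff.mp m.isLt) ((hωv m).trans hm)
    simp [hempty]

end BirthDeath

section Lyapunov

variable (p q : ℕ → ℝ)

noncomputable def aseqTail (k : ℕ) : ℝ := ∑' j, aseq p q (j + k)

/-- The expected time for the chain to pass from `k` to `k - 1`. -/
noncomputable def stepDownTime (k : ℕ) : ℝ := aseqTail p q k / (aseq p q k * q k)

/-- The expected absorption time from `i`; the `toNat` makes it vanish at `-1`. -/
noncomputable def lyapunovFn (i : ℤ) : ℝ := ∑ m ∈ Finset.range (i + 1).toNat, stepDownTime p q m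

variable {p q}

lemma aseq_succ (n : ℕ) : aseq p q (n + 1) = aseq p q n * (p n / q (n + 1)) := by
  rw [aseq, Finset.prod_Icc_succ_top (by omega), ← aseq, Nat.add_sub_cancel]

lemma aseqTail_eq_add (ha : Summable (aseq p q)) (k : ℕ) :
    aseqTail p q k = aseq p q k + aseqTail p q (k + 1) := by
  rw [aseqTail, ((summable_nat_add_iff k).mpr ha).tsum_eq_zero_add, zero_add, aseqTail]
  simp only [add_right_comm _ 1 k, add_assoc]

variable (hp : ∀ i, 0 < p i) (hq : ∀ i, 0 < q i)
include hp hq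

lemma aseq_pos (n : ℕ) : 0 < aseq p q n :=
  Finset.prod_pos fun _ _ => div_pos (hp _) (hq _)

lemma stepDownTime_nonneg (k : ℕ) : 0 ≤ stepDownTime p q k :=
  div_nonneg (tsum_nonneg fun _ => (aseq_pos hp hq _).le)
    (mul_nonneg (aseq_pos hp hq k).le (hq k).le)

lemma q_mul_stepDownTime (ha : Summable (aseq p q)) (k : ℕ) :
    q k * stepDownTime p q k = 1 + p k * stepDownTime p q (k + 1) := by
  have hak := (aseq_pos hp hq k).ne'
  have hqk := (hq k).ne'
  have hqk1 := (hq (k + 1)).ne'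
  have hpk := (hp k).ne'
  rw [stepDownTime, stepDownTime, aseq_succ, aseqTail_eq_add ha k]
  field_simp

lemma lyapunovFn_nonneg (i : ℤ) : 0 ≤ lyapunovFn p q i :=
  Finset.sum_nonneg fun m _ => stepDownTime_nonneg hp hq m

lemma lyapunovFn_eq_one_add (hpq : ∀ i, p i + q i = 1) (ha : Summable (aseq p q)) {i : ℤ}
    (hi : 0 ≤ i) :
    lyapunovFn p q i =
      1 + p i.toNat * lyapunovFn p q (i + 1) + q i.toNat * lyapunovFn p q (i - 1) := by
  obtain ⟨k, rfl⟩ := Int.eq_ofNat_of_zero_le hi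
  have hup : lyapunovFn p q (k + 1) = lyapunovFn p q k + stepDownTime p q (k + 1) := by
    rw [lyapunovFn, lyapunovFn, show (k + 1 + 1 : ℤ).toNat = k + 1 + 1 by omega,
      show (k + 1 : ℤ).toNat = k + 1 by omega, Finset.sum_range_succ]
  have hdown : lyapunovFn p q k = lyapunovFn p q (k - 1) + stepDownTime p q k := by
    rw [lyapunovFn, lyapunovFn, show (k + 1 : ℤ).toNat = k + 1 by omega,
      show (k - 1 + 1 : ℤ).toNat = k by omega, Finset.sum_range_succ]
  simp only [Int.toNat_natCast]
  linear_combination q_mul_stepDownTime hp hq ha k - p k * hup + q k * hdown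
    - lyapunovFn p q k * hpq k

lemma one_add_tsum_killedKernel_mul_le (hpq : ∀ i, p i + q i = 1) (ha : Summable (aseq p q))
    {i : ℤ} (hi : 0 ≤ i) :
    1 + ∑' z, killedKernel p q i z * ENNReal.ofReal (lyapunovFn p q z) ≤
      ENNReal.ofReal (lyapunovFn p q i) := by
  have hpg := mul_nonneg (hp i.toNat).le (lyapunovFn_nonneg hp hq (i + 1))
  have hqg := mul_nonneg (hq i.toNat).le (lyapunovFn_nonneg hp hq (i - 1))
  calc 1 + ∑' z, killedKernel p q i z * ENNReal.ofReal (lyapunovFn p q z)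
      ≤ 1 + ∑' z, ENNReal.ofReal (bdKernel p q i z) * ENNReal.ofReal (lyapunovFn p q z) := by
        gcongr with z
        exact killedKernel_le i z
    _ = ENNReal.ofReal (1 + p i.toNat * lyapunovFn p q (i + 1)
          + q i.toNat * lyapunovFn p q (i - 1)) := by
        rw [tsum_ofReal_bdKernel_mul hi, ← ENNReal.ofReal_mul (hp _).le,
          ← ENNReal.ofReal_mul (hq _).le, ← ENNReal.ofReal_add hpg hqg,
          ← ENNReal.ofReal_one, ← ENNReal.ofReal_add zero_le_one (add_nonneg hpg hqg), add_assoc]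
    _ = ENNReal.ofReal (lyapunovFn p q i) := by rw [← lyapunovFn_eq_one_add hp hq hpq ha hi]

end Lyapunov

theorem stmt4_general (p q : ℕ → ℝ)
    (hp : ∀ i, p i ∈ Set.Ioo (0 : ℝ) 1) (hq : ∀ i, q i ∈ Set.Ioo (0 : ℝ) 1)
    (hpq : ∀ i, p i + q i = 1)
    (μ : ℤ → Measure (ℕ → ℤ))
    (hlaw : IsBDLaw p q μ)
    (ha : Summable (fun n : ℕ => aseq p q (n + 1))) :
    ∀ i : ℕ,
      ∫⁻ ω, (⨅ n ∈ {m : ℕ | ω m = -1}, (n : ℝ≥0∞)) ∂(μ i) < ⊤ := by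
  intro i
  have hp₀ : ∀ j, 0 < p j := fun j => (hp j).1
  have hq₀ : ∀ j, 0 < q j := fun j => (hq j).1
  have ha₀ : Summable (aseq p q) := (summable_nat_add_iff 1).mp ha
  calc ∫⁻ ω, (⨅ n ∈ {m : ℕ | ω m = -1}, (n : ℝ≥0∞)) ∂(μ i)
      ≤ ∑' n, μ i (survivalSet (-1) n) := lintegral_hitTime_le_tsum_survivalSet _ _
    _ ≤ ∑' n, pathMass (killedKernel p q) n i := ENNReal.tsum_le_tsum fun n =>
        hlaw.measure_survivalSet_le_pathMass (fun j => (hp₀ j).le) (fun j => (hq₀ j).le) i n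
    _ ≤ ENNReal.ofReal (lyapunovFn p q i) :=
        tsum_pathMass_le (S := {i | 0 ≤ i})
          (fun _ hj _ hz => killedKernel_eq_zero hj (not_le.mp hz))
          (fun _ hj => one_add_tsum_killedKernel_mul_le hp₀ hq₀ hpq ha₀ hj) (Int.natCast_nonneg i)
    _ < ⊤ := ENNReal.ofReal_lt_top

theorem stmt4 (p q : ℕ → ℝ)
    (hp : ∀ i, p i ∈ Set.Ioo (0 : ℝ) 1) (hq : ∀ i, q i ∈ Set.Ioo (0 : ℝ) 1)
    (hpq : ∀ i, p i + q i = 1)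
    (μ : ℤ → Measure (ℕ → ℤ)) (hμ : ∀ i, IsProbabilityMeasure (μ i))
    (hlaw : IsBDLaw p q μ)
    (hc : ¬ Summable (cseq p q))
    (ha : Summable (fun n : ℕ => aseq p q (n + 1))) :
    ∀ i : ℕ,
      ∫⁻ ω, (⨅ n ∈ {m : ℕ | ω m = -1}, (n : ℝ≥0∞)) ∂(μ i) < ⊤ :=
  stmt4_general p q hp hq hpq μ hlaw ha
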